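/- arXiv:1112.4665 — 5 statements merged into one kernel-verified Lean document; each statement's English description precedes it below -/
import Mathlib

section
/- Let $p, q \in \mathbb{R}^n$, $\beta \in \mathbb{R}$, and let $M$ be the symmetric matrix with entries $M_{ij} = p_i\delta_{ij} - \beta q_i q_j$. Then for each $0 \le k \le n$, the $k$-th elementary symmetric function of the eigenvalues of $M$ equals $\sigma_k(p) - \beta \sum_{i=1}^n q_i^2\, \sigma_{k-1;i}(p)$, where $\sigma_{k-1;i}(p)$ denotes the $(k-1)$-th elementary symmetric function of the variables $(p_j)_{j\neq i}$ and $\sigma_{-1} := 0$. -/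
/-!
The characteristic matrix `X - M = diag(X - pᵢ) + β q qᵀ` is a diagonal matrix plus a rank-one
matrix, so by the matrix determinant lemma
`det (X - M) = ∏ᵢ (X - pᵢ) + β ∑ᵢ qᵢ² ∏_{j ≠ i} (X - pⱼ)`.
By Vieta, the coefficient of `X^(n-k)` of `∏ᵢ (X - λᵢ)` is `(-1)^k σ_k(λ)`; comparing the
coefficients of `X^(n-k)` on both sides gives the formula.
-/

open Finset Matrix

noncomputable def esym {n : ℕ} (s : Finset (Fin n)) (k : ℕ) (a : Fin n → ℝ) : ℝ :=
  ∑ T ∈ s.powersetCard k, ∏ i ∈ T, a i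

open Polynomial

section DiagonalAddRankOne

variable {ι : Type*} [Fintype ι] [DecidableEq ι]

theorem det_diagonal_add_vecMulVec_of_ne_zero {K : Type*} [Field K] (d u v : ι → K)
    (hd : ∀ i, d i ≠ 0) :
    (diagonal d + vecMulVec u v).det = ∏ i, d i + ∑ i, u i * v i * ∏ j ∈ univ.erase i, d j := by
  have hfactor : diagonal d + vecMulVec u v
      = diagonal d * (1 + replicateCol Unit (u / d) * replicateRow Unit v) := by
    ext i j
    rcases eq_or_ne i j with rfl | hij
    · simp [← vecMulVec_eq, vecMulVec_apply, mul_add]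
      field_simp [hd i]
    · simp [← vecMulVec_eq, vecMulVec_apply, hij]
      field_simp [hd i]
  rw [hfactor, det_mul, det_diagonal, det_one_add_replicateCol_mul_replicateRow, mul_add, mul_one,
    dotProduct, Finset.mul_sum]
  congr 1
  refine Finset.sum_congr rfl fun i _ => ?_
  rw [← Finset.mul_prod_erase _ _ (Finset.mem_univ i), Pi.div_apply]
  field_simp [hd i]

theorem det_diagonal_add_vecMulVec {R : Type*} [CommRing R] [IsDomain R] (d u v : ι → R)
    (hd : ∀ i, d i ≠ 0) :
    (diagonal d + vecMulVec u v).det = ∏ i, d i + ∑ i, u i * v i * ∏ j ∈ univ.erase i, d j := by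
  let f := algebraMap R (FractionRing R)
  have hf : Function.Injective f := IsFractionRing.injective R (FractionRing R)
  apply hf
  have hmap : (diagonal d + vecMulVec u v).map f
      = diagonal (fun i => f (d i)) + vecMulVec (f ∘ u) (f ∘ v) := by
    rw [Matrix.map_add f (map_add f), diagonal_map (map_zero f)]
    ext i j
    simp [vecMulVec_apply]
  rw [RingHom.map_det, RingHom.mapMatrix_apply, hmap,
    det_diagonal_add_vecMulVec_of_ne_zero _ _ _ fun i => (map_ne_zero_iff f hf).2 (hd i)]
  simp [map_sum, map_prod]

theorem esym_neg {n : ℕ} (s : Finset (Fin n)) (k : ℕ) (a : Fin n → ℝ) :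
    esym s k (-a) = (-1) ^ k * esym s k a := by
  rw [esym, esym, Finset.mul_sum]
  refine Finset.sum_congr rfl fun T hT => ?_
  rw [← (Finset.mem_powersetCard.mp hT).2, ← Finset.prod_const, ← Finset.prod_mul_distrib]
  simp

theorem esym_eq_coeff_prod_X_sub_C {n : ℕ} (s : Finset (Fin n)) (a : Fin n → ℝ) {k : ℕ}
    (hk : k ≤ #s) :
    esym s k a = (-1) ^ k * (∏ i ∈ s, (X - C (a i))).coeff (#s - k) := by
  simp_rw [sub_eq_add_neg, ← C_neg]
  rw [Finset.prod_X_add_C_coeff s _ (Nat.sub_le _ _), Nat.sub_sub_self hk]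
  change _ = _ * esym s k (-a)
  rw [esym_neg, ← mul_assoc, ← mul_pow, neg_one_mul, neg_neg, one_pow, one_mul]

theorem charpoly_diagonal_sub_vecMulVec {R : Type*} [CommRing R] [IsDomain R] (d u v : ι → R) :
    (diagonal d - vecMulVec u v).charpoly
      = ∏ i, (X - C (d i)) + ∑ i, C (u i * v i) * ∏ j ∈ univ.erase i, (X - C (d j)) := by
  have hcharmatrix : charmatrix (diagonal d - vecMulVec u v)
      = diagonal (fun i => X - C (d i)) + vecMulVec (fun i => C (u i)) (fun i => C (v i)) := by
    ext i j : 2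
    rcases eq_or_ne i j with rfl | hij
    · simp [vecMulVec_apply]
      ring
    · simp [vecMulVec_apply, hij]
  rw [charpoly, hcharmatrix, det_diagonal_add_vecMulVec _ _ _ fun i => X_sub_C_ne_zero (d i)]
  simp_rw [C_mul]

end DiagonalAddRankOne

/-- For `M = diag(p) - β q qᵀ`, the `k`-th elementary symmetric function of the eigenvalues
of `M` equals `σ_k(p) - β ∑ᵢ qᵢ² σ_{k-1;i}(p)` (with `σ_{-1} := 0`). -/
theorem stmt_1 (n k : ℕ) (hkn : k ≤ n) (p q : Fin n → ℝ) (β : ℝ)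
    (M : Matrix (Fin n) (Fin n) ℝ)
    (hMdef : ∀ i j, M i j = p i * (if i = j then 1 else 0) - β * (q i * q j))
    (hM : M.IsHermitian) :
    esym Finset.univ k hM.eigenvalues
      = esym Finset.univ k p
        - β * ∑ i, q i ^ 2 *
            (if k = 0 then 0 else esym (Finset.univ.erase i) (k - 1) p) := by
  cases k with
  | zero => simp [esym]
  | succ k =>
  have hMeq : M = diagonal p - vecMulVec (fun i => β * q i) q := by
    ext i j
    simp [hMdef, diagonal_apply, vecMulVec_apply, mul_assoc]
  have hcharpoly : ∏ i, (X - C (hM.eigenvalues i))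
      = ∏ i, (X - C (p i)) + ∑ i, C (β * q i * q i) * ∏ j ∈ univ.erase i, (X - C (p j)) := by
    calc _ = M.charpoly := by simpa using hM.charpoly_eq.symm
      _ = _ := by rw [hMeq, charpoly_diagonal_sub_vecMulVec]
  have hcard : #(univ : Finset (Fin n)) = n := card_fin n
  have hcard_erase (i : Fin n) : #(univ.erase i) = n - 1 := by
    rw [card_erase_of_mem (mem_univ i), hcard]
  have hesym_erase (i : Fin n) : esym (univ.erase i) k p
      = (-1) ^ k * (∏ j ∈ univ.erase i, (X - C (p j))).coeff (n - (k + 1)) := by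
    rw [esym_eq_coeff_prod_X_sub_C _ _ (by rw [hcard_erase]; omega), hcard_erase,
      show n - 1 - k = n - (k + 1) by omega]
  have hk : k + 1 ≤ #(univ : Finset (Fin n)) := hcard.symm ▸ hkn
  rw [esym_eq_coeff_prod_X_sub_C _ _ hk, esym_eq_coeff_prod_X_sub_C _ _ hk, hcharpoly, hcard]
  simp only [hesym_erase, coeff_add, finsetSum_coeff, coeff_C_mul, if_neg k.succ_ne_zero,
    Nat.add_sub_cancel]
  rw [mul_add, Finset.mul_sum, Finset.mul_sum, sub_eq_add_neg, ← Finset.sum_neg_distrib]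
  congr 1
  exact Finset.sum_congr rfl fun i _ => by ring
end

section
/- Let $n \ge 2$, $1 \le k \le n-1$, and $a \in \mathbb{R}^n$ with all $a_i > 0$ and $\sigma_k(a) = 1$. Define $h_k(a) = \max_{1\le i \le n} a_i\, \sigma_{k-1;i}(a)$. Then $\frac{k}{n} \le h_k(a) < 1$, and equality $h_k(a) = \frac{k}{n}$ holds if and only if $a_1 = a_2 = \cdots = a_n = \binom{n}{k}^{-1/k}$. -/
/-!
Write `b i = a i * σ_{k-1;i}(a)`. Double counting gives `∑ i, b i = k σ_k(a) = k`, so the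
maximum of the `b i` is at least their mean `k / n`, with equality iff all `b i` agree.
Pascal's rule `σ_k(a) = σ_{k;i}(a) + b i` with `σ_{k;i}(a) > 0` gives `b i < 1`, and
`b i - b j = (a i - a j) σ_{k-1;i,j}(a)` shows that the `b i` agree iff the `a i` do, in which case
`1 = σ_k(a) = (n choose k) c ^ k` pins down the common value `c`.
-/

open Finset

lemma Finset.sum_eq_card_nsmul_sup'_iff {ι M : Type*} [AddCommMonoid M] [LinearOrder M]
    [IsOrderedCancelAddMonoid M] {s : Finset ι} (hs : s.Nonempty) (f : ι → M) :
    ∑ i ∈ s, f i = #s • s.sup' hs f ↔ ∀ i ∈ s, f i = s.sup' hs f := by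
  rw [← sum_const]
  exact sum_eq_sum_iff_of_le fun i hi => le_sup' f hi

lemma Finset.forall_eq_sup'_iff {ι α : Type*} [LinearOrder α] {s : Finset ι} (hs : s.Nonempty)
    (f : ι → α) : (∀ i ∈ s, f i = s.sup' hs f) ↔ ∀ i ∈ s, ∀ j ∈ s, f i = f j :=
  ⟨fun h i hi j hj => (h i hi).trans (h j hj).symm,
    fun h i hi => le_antisymm (le_sup' f hi) (sup'_le _ _ fun j hj => (h j hj i hi).le)⟩

lemma Real.eq_rpow_neg_inv_of_mul_pow_eq_one {c x : ℝ} (hx : 0 ≤ x) {k : ℕ} (hk : k ≠ 0)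
    (h : c * x ^ k = 1) : x = c ^ (-1 / k : ℝ) := by
  rw [eq_inv_of_mul_eq_one_left h, neg_div, Real.rpow_neg (by positivity), Real.inv_rpow
    (by positivity), inv_inv, one_div, Real.pow_rpow_inv_natCast hx hk]

section Esym

variable {n : ℕ}

lemma esym_const (s : Finset (Fin n)) (k : ℕ) (c : ℝ) :
    esym s k (fun _ => c) = (#s).choose k * c ^ k := by
  unfold esym
  rw [sum_congr rfl fun T hT => by rw [prod_const, (mem_powersetCard.mp hT).2], sum_const,
    card_powersetCard, nsmul_eq_mul]

lemma esym_succ_of_mem (a : Fin n → ℝ) {s : Finset (Fin n)} {i : Fin n} (hi : i ∈ s) (m : ℕ) :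
    esym s (m + 1) a = esym (s.erase i) (m + 1) a + a i * esym (s.erase i) m a := by
  have hi_notMem : ∀ T ∈ (s.erase i).powersetCard m, i ∉ T := fun T hT hiT =>
    notMem_erase i s ((mem_powersetCard.mp hT).1 hiT)
  unfold esym
  conv_lhs => rw [← insert_erase hi]
  rw [powersetCard_succ_insert (notMem_erase i s), sum_union, sum_image, mul_sum]
  · exact congrArg _ (sum_congr rfl fun T hT => prod_insert (hi_notMem T hT))
  · intro T hT T' hT' h
    rw [← erase_insert (hi_notMem T hT), h, erase_insert (hi_notMem T' hT')]
  · grind [disjoint_left]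

lemma sum_mul_esym_erase (a : Fin n → ℝ) (s : Finset (Fin n)) (m : ℕ) :
    ∑ i ∈ s, a i * esym (s.erase i) m a = (m + 1) * esym s (m + 1) a := by
  unfold esym
  calc ∑ i ∈ s, a i * ∑ T ∈ (s.erase i).powersetCard m, ∏ j ∈ T, a j
      = ∑ i ∈ s, ∑ T ∈ (s.erase i).powersetCard m, ∏ j ∈ insert i T, a j := by
        refine sum_congr rfl fun i _ => ?_
        rw [mul_sum]
        refine sum_congr rfl fun T hT => ?_
        grind [prod_insert]
    _ = ∑ S ∈ s.powersetCard (m + 1), ∑ _i ∈ S, ∏ j ∈ S, a j := by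
        rw [sum_sigma', sum_sigma']
        apply sum_bij' (fun p _ => ⟨insert p.1 p.2, p.1⟩) (fun p _ => ⟨p.2, p.1.erase p.2⟩)
        all_goals grind [prod_insert, card_insert_of_notMem, insert_erase, erase_insert]
    _ = (m + 1) * ∑ S ∈ s.powersetCard (m + 1), ∏ j ∈ S, a j := by
        rw [mul_sum]
        refine sum_congr rfl fun S hS => ?_
        rw [sum_const, nsmul_eq_mul, (mem_powersetCard.mp hS).2]
        push_cast
        ring

lemma mul_esym_erase_sub_mul_esym_erase (a : Fin n → ℝ) {s : Finset (Fin n)} {i j : Fin n}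
    (hi : i ∈ s) (hj : j ∈ s) (hij : i ≠ j) (m : ℕ) :
    a i * esym (s.erase i) m a - a j * esym (s.erase j) m a
      = (a i - a j) * esym ((s.erase i).erase j) m a := by
  rcases m with _ | m
  · simp [esym]
  · rw [esym_succ_of_mem a (mem_erase.mpr ⟨hij.symm, hj⟩) m,
      esym_succ_of_mem a (mem_erase.mpr ⟨hij, hi⟩) m, erase_right_comm (a := j)]
    ring

variable {a : Fin n → ℝ}

lemma esym_pos (ha : ∀ i, 0 < a i) {s : Finset (Fin n)} {k : ℕ} (hk : k ≤ #s) :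
    0 < esym s k a :=
  sum_pos (fun _ _ => prod_pos fun i _ => ha i) (powersetCard_nonempty.mpr hk)

lemma mul_esym_erase_lt_esym (ha : ∀ i, 0 < a i) {s : Finset (Fin n)} {i : Fin n}
    (hi : i ∈ s) {m : ℕ} (hm : m + 1 < #s) :
    a i * esym (s.erase i) m a < esym s (m + 1) a := by
  have : 0 < esym (s.erase i) (m + 1) a := esym_pos ha (by rw [card_erase_of_mem hi]; omega)
  rw [esym_succ_of_mem a hi]
  linarith

lemma mul_esym_erase_eq_iff (ha : ∀ i, 0 < a i) {s : Finset (Fin n)} {i j : Fin n}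
    (hi : i ∈ s) (hj : j ∈ s) {m : ℕ} (hm : m + 2 ≤ #s) :
    a i * esym (s.erase i) m a = a j * esym (s.erase j) m a ↔ a i = a j := by
  rcases eq_or_ne i j with rfl | hij
  · simp
  have hpos : 0 < esym ((s.erase i).erase j) m a := esym_pos ha <| by
    rw [card_erase_of_mem (mem_erase.mpr ⟨hij.symm, hj⟩), card_erase_of_mem hi]
    omega
  rw [← sub_eq_zero, mul_esym_erase_sub_mul_esym_erase a hi hj hij, mul_eq_zero, sub_eq_zero,
    or_iff_left hpos.ne']

lemma eq_choose_rpow_of_esym_eq_one (ha : ∀ i, 0 ≤ a i) {k : ℕ} (hk : k ≠ 0)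
    (hsk : esym univ k a = 1) (hconst : ∀ i j, a i = a j) (i : Fin n) :
    a i = (n.choose k : ℝ) ^ (-1 / k : ℝ) := by
  rw [show a = fun _ => a i from funext fun j => hconst j i, esym_const, card_univ,
    Fintype.card_fin] at hsk
  exact Real.eq_rpow_neg_inv_of_mul_pow_eq_one (ha i) hk hsk

end Esym

/-- With h_k(a) = max_i a_i σ_{k-1;i}(a): k/n ≤ h_k(a) < 1, with equality h_k(a) = k/n
iff all a_i equal the constant (n choose k)^{-1/k}. -/
theorem stmt_6 (n k : ℕ) (hk : 1 ≤ k) (hkn : k ≤ n - 1)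
    (a : Fin n → ℝ) (hpos : ∀ i, 0 < a i) (hsk : esym Finset.univ k a = 1) :
    let h := Finset.univ.sup'
      (Finset.univ_nonempty_iff.mpr (Fin.pos_iff_nonempty.mp (by omega)))
      (fun i => a i * esym (Finset.univ.erase i) (k - 1) a)
    (k : ℝ) / n ≤ h ∧ h < 1 ∧
      (h = (k : ℝ) / n ↔ ∀ i, a i = ((n.choose k : ℝ)) ^ (-(1 : ℝ) / k)) := by
  obtain ⟨m, rfl⟩ : ∃ m, k = m + 1 := ⟨k - 1, by omega⟩
  set b : Fin n → ℝ := fun i => a i * esym (univ.erase i) m a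
  intro h
  have hne : (univ : Finset (Fin n)).Nonempty := univ_nonempty_iff.mpr ⟨⟨0, by omega⟩⟩
  have hh : h = univ.sup' hne b := rfl
  have hcard : #(univ : Finset (Fin n)) = n := by simp
  have hn_pos : (0 : ℝ) < n := by norm_cast; omega
  have hsum : ∑ i, b i = m + 1 := by
    rw [sum_mul_esym_erase, hsk, mul_one]
  refine ⟨?_, (sup'_lt_iff _).mpr fun i hi => ?_, ?_⟩
  · rw [div_le_iff₀' hn_pos]
    simpa [← hsum, hcard] using sum_le_card_nsmul univ b h fun i hi => hh ▸ le_sup' b hi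
  · simpa [hsk] using mul_esym_erase_lt_esym hpos hi (m := m) (by simp; omega)
  · calc h = ((m + 1 : ℕ) : ℝ) / n ↔ ∑ i, b i = #(univ : Finset (Fin n)) • h := by
          rw [hsum, hcard, nsmul_eq_mul, eq_div_iff hn_pos.ne', mul_comm, eq_comm]
          norm_cast
      _ ↔ ∀ i j, b i = b j := by
          simpa [hh] using (sum_eq_card_nsmul_sup'_iff hne b).trans (forall_eq_sup'_iff hne b)
      _ ↔ ∀ i j, a i = a j :=
          forall₂_congr fun i j => mul_esym_erase_eq_iff hpos (mem_univ i) (mem_univ j)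
            (by simp; omega)
      _ ↔ ∀ i, a i = ((n.choose (m + 1) : ℝ)) ^ (-(1 : ℝ) / (m + 1 : ℕ)) :=
          ⟨eq_choose_rpow_of_esym_eq_one (fun i => (hpos i).le) (by omega) hsk,
            fun hc i j => (hc i).trans (hc j).symm⟩
end

section
/- Let $a \in \mathbb{R}^n$ with all $a_i > 0$ and $\sigma_k(a) = 1$ for some $2 \le k \le n$. Then for every $1 \le m \le k-1$ and every index $i$, one has $\sigma_m(a)\,\sigma_{k-1;i}(a) \ge \sigma_{m-1;i}(a)$. -/
open Finset

/-!
Write `E_j` for the elementary symmetric functions of the variables other than `a i`. Splitting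
off `a i` gives `σ_j = E_j + a i * E_{j-1}`, so by `σ_k = 1` the claim reduces to
`E_{m-1} E_k ≤ E_m E_{k-1}`. This is the statement that the ratios `E_{j+1} / E_j` decrease, a
weak form of Newton's inequalities. It is proved by induction on the set of variables: adjoining
a variable `c ≥ 0` multiplies the generating polynomial `∑ E_j X^j` by `1 + c X`, and this
preserves decreasing ratios of a nonnegative coefficient sequence.
-/

/-- For positive `f`, this says that `j ↦ f (j + 1) / f j` is antitone. -/
def HasAntitoneRatios (f : ℕ → ℝ) : Prop :=
  ∀ ⦃p q : ℕ⦄, p ≤ q → f p * f (q + 1) ≤ f (p + 1) * f q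

namespace HasAntitoneRatios

variable {f : ℕ → ℝ}

theorem mul_add_two_le (hf : HasAntitoneRatios f) {p q : ℕ} (hpq : p ≤ q) :
    f p * f (q + 2) ≤ f (p + 2) * f q := by
  rcases hpq.eq_or_lt with rfl | hlt
  · rw [mul_comm]
  · calc f p * f (q + 2) ≤ f (p + 1) * f (q + 1) := hf (by omega)
      _ ≤ f (p + 2) * f q := hf hlt

/-- Multiplying the generating series of `f` by `1 + c X` preserves antitone ratios. -/
theorem of_eq_add_mul {g : ℕ → ℝ} {c : ℝ} (hf : HasAntitoneRatios f) (hf₀ : ∀ j, 0 ≤ f j)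
    (hc : 0 ≤ c) (hg₀ : g 0 = f 0) (hg : ∀ j, g (j + 1) = f (j + 1) + c * f j) :
    HasAntitoneRatios g := by
  intro p q hpq
  match p, q with
  | 0, 0 => rw [mul_comm]
  | 0, q + 1 =>
    rw [hg₀, hg, hg, hg, zero_add]
    nlinarith [hf (Nat.zero_le (q + 1)), mul_nonneg hc (mul_nonneg (hf₀ 1) (hf₀ q)),
      mul_nonneg (mul_nonneg hc hc) (mul_nonneg (hf₀ 0) (hf₀ q))]
  | p + 1, q + 1 =>
    have hpq' : p ≤ q := Nat.le_of_succ_le_succ hpq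
    rw [hg, hg, hg, hg]
    nlinarith [hf hpq, mul_le_mul_of_nonneg_left (hf.mul_add_two_le hpq') hc,
      mul_le_mul_of_nonneg_left (hf hpq') (mul_nonneg hc hc)]

end HasAntitoneRatios

section Esym

variable {n : ℕ} (a : Fin n → ℝ)

theorem esym_nonneg (ha : ∀ i, 0 ≤ a i) (s : Finset (Fin n)) (k : ℕ) : 0 ≤ esym s k a :=
  sum_nonneg fun _ _ => prod_nonneg fun i _ => ha i

@[simp]
theorem esym_zero (s : Finset (Fin n)) : esym s 0 a = 1 := by
  simp [esym]

@[simp]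
theorem esym_empty_succ (k : ℕ) : esym ∅ (k + 1) a = 0 := by
  rw [esym, powersetCard_eq_empty.2 (by simp), sum_empty]

theorem esym_insert {x : Fin n} {s : Finset (Fin n)} (hx : x ∉ s) (k : ℕ) :
    esym (insert x s) (k + 1) a = esym s (k + 1) a + a x * esym s k a := by
  have hxT : ∀ T ∈ s.powersetCard k, x ∉ T := fun T hT h => hx ((mem_powersetCard.1 hT).1 h)
  rw [esym, esym, esym, powersetCard_succ_insert hx, sum_union, sum_image, mul_sum]
  · exact congrArg _ (sum_congr rfl fun T hT => prod_insert (hxT T hT))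
  · intro T hT U hU hTU
    rw [← erase_insert (hxT T hT), ← erase_insert (hxT U hU)]
    exact congrArg (·.erase x) hTU
  · refine disjoint_right.2 fun T hT hT' => ?_
    obtain ⟨U, -, rfl⟩ := mem_image.1 hT
    exact hx ((mem_powersetCard.1 hT').1 (mem_insert_self x U))

theorem esym_univ_succ (i : Fin n) (k : ℕ) :
    esym univ (k + 1) a = esym (univ.erase i) (k + 1) a + a i * esym (univ.erase i) k a := by
  rw [← esym_insert a (notMem_erase i univ), insert_erase (mem_univ i)]

theorem hasAntitoneRatios_esym (ha : ∀ i, 0 ≤ a i) (s : Finset (Fin n)) :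
    HasAntitoneRatios (esym s · a) := by
  induction s using Finset.induction_on with
  | empty =>
    intro p q _
    simp
  | insert x s hx ih =>
    exact ih.of_eq_add_mul (esym_nonneg a ha s) (ha x) (by simp) (esym_insert a hx)

end Esym

theorem stmt_8_general (n k m : ℕ)
    (a : Fin n → ℝ) (hpos : ∀ i, 0 < a i) (hsk : esym Finset.univ k a = 1)
    (hm : 1 ≤ m) (hmk : m ≤ k - 1) (i : Fin n) :
    esym (Finset.univ.erase i) (m - 1) a
      ≤ esym Finset.univ m a * esym (Finset.univ.erase i) (k - 1) a := by
  obtain ⟨m, rfl⟩ : ∃ m', m = m' + 1 := ⟨m - 1, by omega⟩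
  obtain ⟨k, rfl⟩ : ∃ k', k = k' + 1 := ⟨k - 1, by omega⟩
  set E := (esym (univ.erase i) · a)
  have hratio : E m * E (k + 1) ≤ E (m + 1) * E k :=
    hasAntitoneRatios_esym a (fun j => (hpos j).le) _ (by omega)
  rw [esym_univ_succ a i] at hsk ⊢
  simp only [Nat.add_sub_cancel]
  calc E m = E m * (E (k + 1) + a i * E k) := by rw [hsk, mul_one]
    _ ≤ E (m + 1) * E k + a i * (E m * E k) := by nlinarith
    _ = (E (m + 1) + a i * E m) * E k := by ring

/-- If σ_k(a) = 1 then σ_m(a) σ_{k-1;i}(a) ≥ σ_{m-1;i}(a) for 1 ≤ m ≤ k-1. -/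
theorem stmt_8 (n k m : ℕ) (hk : 2 ≤ k) (hkn : k ≤ n)
    (a : Fin n → ℝ) (hpos : ∀ i, 0 < a i) (hsk : esym Finset.univ k a = 1)
    (hm : 1 ≤ m) (hmk : m ≤ k - 1) (i : Fin n) :
    esym (Finset.univ.erase i) (m - 1) a
      ≤ esym Finset.univ m a * esym (Finset.univ.erase i) (k - 1) a :=
  stmt_8_general n k m a hpos hsk hm hmk i
end

section
/- Let $n \ge 2$, $a \in \mathbb{R}^n$ with all $a_i > 0$ and $\sum_{i=1}^n a_i = 1$, and $0 < \alpha < \beta$. Suppose $\omega \in C^2(\alpha, \beta)$ is such that $u(x) = \omega\left(\frac12\sum_i a_i x_i^2\right)$ satisfies $\Delta u = 1$ on $\{x : \alpha < \frac12\sum_i a_i x_i^2 < \beta\}$, and $\omega''$ is not identically zero on $(\alpha,\beta)$. Then $a_1 = a_2 = \cdots = a_n = \frac{1}{n}$. -/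
open Finset

/-- The Hessian matrix of `u : ℝⁿ → ℝ` at `x`. -/
noncomputable def hess {n : ℕ} (u : (Fin n → ℝ) → ℝ) (x : Fin n → ℝ) :
    Matrix (Fin n) (Fin n) ℝ :=
  fun i j => fderiv ℝ (fun y => fderiv ℝ u y (Pi.single j 1)) x (Pi.single i 1)

/-!
Write `s(x) = ½ ∑ aᵢ xᵢ²`. For `u = ω ∘ s` one has `∂ᵢᵢu = ω'(s) aᵢ + ω''(s) (aᵢxᵢ)²`, so
`Δu = ω'(s) + ω''(s) ∑ (aᵢxᵢ)²`. Pick `t` in `(α, β)` with `ω''(t) ≠ 0` and evaluate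
`Δu = 1` at the point of the `i`-th coordinate axis with `s = t`: there `∑ (aⱼxⱼ)² = 2 t aᵢ`, so
`ω'(t) + 2 t ω''(t) aᵢ = 1` for every `i`. Since `2 t ω''(t) ≠ 0`, all `aᵢ` are equal.
-/

section WeightedSquares

variable {ι : Type*} [Fintype ι]

noncomputable def halfWeightedSqNorm (a x : ι → ℝ) : ℝ := 1 / 2 * ∑ i, a i * x i ^ 2

theorem continuous_halfWeightedSqNorm (a : ι → ℝ) : Continuous (halfWeightedSqNorm a) := by
  unfold halfWeightedSqNorm
  fun_prop

theorem hasFDerivAt_halfWeightedSqNorm (a x : ι → ℝ) :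
    HasFDerivAt (halfWeightedSqNorm a)
      (∑ i, (a i * x i) • (ContinuousLinearMap.proj i : (ι → ℝ) →L[ℝ] ℝ)) x := by
  have hsq (i : ι) : HasFDerivAt (fun y : ι → ℝ => a i * y i ^ 2)
      ((a i * (2 * x i)) • (ContinuousLinearMap.proj i : (ι → ℝ) →L[ℝ] ℝ)) x := by
    have hcoord : HasFDerivAt (fun y : ι → ℝ => y i)
        (ContinuousLinearMap.proj i : (ι → ℝ) →L[ℝ] ℝ) x := hasFDerivAt_apply i x
    refine ((hcoord.pow 2).const_mul (a i)).congr_fderiv ?_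
    simp [smul_smul]
  refine ((HasFDerivAt.fun_sum fun i _ => hsq i).const_mul (1 / 2)).congr_fderiv ?_
  rw [Finset.smul_sum]
  refine Finset.sum_congr rfl fun i _ => ?_
  rw [smul_smul]
  ring_nf

variable [DecidableEq ι]

theorem sum_smul_proj_apply_single (c : ι → ℝ) (j : ι) :
    (∑ i, c i • (ContinuousLinearMap.proj i : (ι → ℝ) →L[ℝ] ℝ)) (Pi.single j 1) = c j := by
  simp [Pi.single_apply]

theorem fderiv_comp_halfWeightedSqNorm_apply_single {a x : ι → ℝ} {ω : ℝ → ℝ}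
    (hω : DifferentiableAt ℝ ω (halfWeightedSqNorm a x)) (j : ι) :
    fderiv ℝ (fun y => ω (halfWeightedSqNorm a y)) x (Pi.single j 1) =
      deriv ω (halfWeightedSqNorm a x) * (a j * x j) := by
  have hcomp : HasFDerivAt (fun y => ω (halfWeightedSqNorm a y)) _ x :=
    hω.hasDerivAt.comp_hasFDerivAt x (hasFDerivAt_halfWeightedSqNorm a x)
  rw [hcomp.fderiv, _root_.smul_apply, sum_smul_proj_apply_single, smul_eq_mul]

theorem exists_halfWeightedSqNorm_eq {a : ι → ℝ} {i : ι} (hai : 0 < a i) {t : ℝ}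
    (ht : 0 ≤ t) :
    ∃ x : ι → ℝ, halfWeightedSqNorm a x = t ∧ ∑ j, (a j * x j) ^ 2 = 2 * t * a i := by
  have hc : √(2 * t / a i) ^ 2 = 2 * t / a i := Real.sq_sqrt (by positivity)
  refine ⟨Pi.single i √(2 * t / a i), ?_, ?_⟩
  · rw [halfWeightedSqNorm, Finset.sum_eq_single i (fun j _ hj => by simp [hj]) (by simp),
      Pi.single_eq_same, hc]
    field_simp
  · rw [Finset.sum_eq_single i (fun j _ hj => by simp [hj]) (by simp), Pi.single_eq_same,
      mul_pow, hc]
    field_simp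

end WeightedSquares

theorem eq_one_div_card_of_forall_eq {ι : Type*} [Fintype ι] {a : ι → ℝ}
    (hconst : ∀ i j, a i = a j) (hsum : ∑ i, a i = 1) (i : ι) :
    a i = 1 / Fintype.card ι := by
  rw [Finset.sum_congr rfl fun j _ => hconst j i, Finset.sum_const, Finset.card_univ,
    nsmul_eq_mul] at hsum
  exact eq_one_div_of_mul_eq_one_right hsum

section Hessian

variable {n : ℕ} {a : Fin n → ℝ} {ω : ℝ → ℝ} {U : Set ℝ}

theorem hess_comp_halfWeightedSqNorm_diag (hU : IsOpen U) (hω : ContDiffOn ℝ 2 ω U)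
    {x : Fin n → ℝ} (hx : halfWeightedSqNorm a x ∈ U) (j : Fin n) :
    hess (fun y => ω (halfWeightedSqNorm a y)) x j j =
      deriv ω (halfWeightedSqNorm a x) * a j +
        deriv (deriv ω) (halfWeightedSqNorm a x) * (a j * x j) ^ 2 := by
  have hω' : ContDiffOn ℝ 1 (deriv ω) U := hω.deriv_of_isOpen hU (by norm_num)
  have hpartial : (fun y => fderiv ℝ (fun y => ω (halfWeightedSqNorm a y)) y (Pi.single j 1))
      =ᶠ[nhds x] fun y => deriv ω (halfWeightedSqNorm a y) * (a j * y j) := by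
    filter_upwards [(hU.preimage (continuous_halfWeightedSqNorm a)).mem_nhds hx] with y hy
    exact fderiv_comp_halfWeightedSqNorm_apply_single
      ((hω.differentiableOn (by norm_num)).differentiableAt (hU.mem_nhds hy)) j
  have hcoord : HasFDerivAt (fun y : Fin n → ℝ => a j * y j)
      (a j • (ContinuousLinearMap.proj j : (Fin n → ℝ) →L[ℝ] ℝ)) x :=
    (hasFDerivAt_apply j x).const_mul (a j)
  have hω'x := ((hω'.differentiableOn one_ne_zero).differentiableAt (hU.mem_nhds hx)).hasDerivAt
  have hcomp : HasFDerivAt (fun y => deriv ω (halfWeightedSqNorm a y)) _ x :=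
    hω'x.comp_hasFDerivAt x (hasFDerivAt_halfWeightedSqNorm a x)
  rw [hess, hpartial.fderiv_eq, (hcomp.fun_mul hcoord).fderiv]
  simp only [add_apply, _root_.smul_apply, ContinuousLinearMap.proj_apply, Pi.single_eq_same,
    sum_smul_proj_apply_single, smul_eq_mul, mul_one]
  ring

theorem sum_hess_comp_halfWeightedSqNorm (hU : IsOpen U) (hω : ContDiffOn ℝ 2 ω U)
    {x : Fin n → ℝ} (hx : halfWeightedSqNorm a x ∈ U) :
    ∑ j, hess (fun y => ω (halfWeightedSqNorm a y)) x j j =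
      deriv ω (halfWeightedSqNorm a x) * ∑ j, a j +
        deriv (deriv ω) (halfWeightedSqNorm a x) * ∑ j, (a j * x j) ^ 2 := by
  simp only [hess_comp_halfWeightedSqNorm_diag hU hω hx, Finset.sum_add_distrib,
    Finset.mul_sum]

end Hessian

theorem stmt_16_general (n : ℕ)
    (a : Fin n → ℝ) (hpos : ∀ i, 0 < a i) (hsum : ∑ i, a i = 1)
    (α β : ℝ) (hαβ : 0 < α)
    (ω : ℝ → ℝ) (hω : ContDiffOn ℝ 2 ω (Set.Ioo α β))
    (hω'' : ∃ s ∈ Set.Ioo α β, deriv (deriv ω) s ≠ 0)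
    (u : (Fin n → ℝ) → ℝ)
    (hu : ∀ x, u x = ω ((1 : ℝ) / 2 * ∑ i, a i * x i ^ 2))
    (hlap : ∀ x : Fin n → ℝ,
      (1 : ℝ) / 2 * ∑ i, a i * x i ^ 2 ∈ Set.Ioo α β → ∑ i, hess u x i i = 1) :
    ∀ i, a i = 1 / n := by
  obtain ⟨t, ht, hω''t⟩ := hω''
  have htpos : 0 < t := hαβ.trans ht.1
  have hu' : u = fun x => ω (halfWeightedSqNorm a x) := funext hu
  have haffine (i : Fin n) : deriv ω t + deriv (deriv ω) t * (2 * t * a i) = 1 := by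
    obtain ⟨x, hxt, hxsq⟩ := exists_halfWeightedSqNorm_eq (hpos i) htpos.le
    have hx : halfWeightedSqNorm a x ∈ Set.Ioo α β := hxt ▸ ht
    have hΔ := hlap x hx
    rwa [hu', sum_hess_comp_halfWeightedSqNorm isOpen_Ioo hω hx, hxt, hsum, hxsq,
      mul_one] at hΔ
  have hconst (i j : Fin n) : a i = a j := by
    have h := (haffine i).trans (haffine j).symm
    rw [add_right_inj] at h
    exact mul_left_cancel₀ (by positivity) (mul_left_cancel₀ hω''t h)
  simpa using eq_one_div_card_of_forall_eq hconst hsum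

/-- If `u(x) = ω(½∑aᵢxᵢ²)` (with `∑aᵢ = 1`, all `aᵢ > 0`) satisfies `Δu = 1` on the
generalized annulus `{α < ½∑aᵢxᵢ² < β}` and `ω''` is not identically zero there, then all
`aᵢ = 1/n`. -/
theorem stmt_16 (n : ℕ) (hn : 2 ≤ n)
    (a : Fin n → ℝ) (hpos : ∀ i, 0 < a i) (hsum : ∑ i, a i = 1)
    (α β : ℝ) (hαβ : 0 < α) (hβ : α < β)
    (ω : ℝ → ℝ) (hω : ContDiffOn ℝ 2 ω (Set.Ioo α β))
    (hω'' : ∃ s ∈ Set.Ioo α β, deriv (deriv ω) s ≠ 0)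
    (u : (Fin n → ℝ) → ℝ)
    (hu : ∀ x, u x = ω ((1 : ℝ) / 2 * ∑ i, a i * x i ^ 2))
    (hlap : ∀ x : Fin n → ℝ,
      (1 : ℝ) / 2 * ∑ i, a i * x i ^ 2 ∈ Set.Ioo α β → ∑ i, hess u x i i = 1) :
    ∀ i, a i = 1 / n :=
  stmt_16_general n a hpos hsum α β hαβ ω hω hω'' u hu hlap
end

section
/- Let $n \ge 3$, $2 \le k \le n-1$, $a \in \mathbb{R}^n$ with all $a_i > 0$ and $\sigma_k(a) = 1$, and $0 < \alpha < \beta$. Suppose $\omega \in C^2(\alpha,\beta)$ with $\omega''$ not identically zero is such that $u(x) = \omega\left(\frac12 \sum_i a_i x_i^2\right)$ satisfies $\sigma_k(\lambda(D^2 u)) = 1$ on the region $\{x \in \mathbb{R}^n : \alpha < \frac12\sum_i a_i x_i^2 < \beta\}$. Then $a_1 = a_2 = \cdots = a_n = \binom{n}{k}^{-1/k}$. -/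
/-!
At a point `x = t eᵢ` on a coordinate axis with `½ aᵢ t² = s`, the Hessian
`D²u = ω'(s) diag(a) + ω''(s) (a ∘ x)(a ∘ x)ᵀ` is diagonal, and expanding `σ_k` of its diagonal
along the entry `i` gives `ω'(s)ᵏ + 2s ω''(s) ω'(s)ᵏ⁻¹ aᵢ σ_{k-1;i}(a) = 1`. Choosing `s` with
`ω''(s) ≠ 0` (which also forces `ω'(s) ≠ 0`), the product `aᵢ σ_{k-1;i}(a)` does not depend on `i`.
Expanding once more, for `i ≠ j` this says `(aᵢ - aⱼ) σ_{k-1}(a without aᵢ, aⱼ) = 0`, and the last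
factor is positive because `k ≤ n - 1`. So all `aᵢ` are equal, and `σ_k(a) = 1` fixes their value.
-/

open Finset Matrix

section

variable {n : ℕ}

namespace esym

lemma eq_esymm_map (s : Finset (Fin n)) (k : ℕ) (a : Fin n → ℝ) :
    esym s k a = (s.val.map a).esymm k :=
  (Finset.esymm_map_val a s k).symm

lemma congr {s : Finset (Fin n)} (k : ℕ) {a b : Fin n → ℝ} (h : ∀ i ∈ s, a i = b i) :
    esym s k a = esym s k b :=
  sum_congr rfl fun _ hT => prod_congr rfl fun i hi => h i ((mem_powersetCard.mp hT).1 hi)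

lemma const_mul (s : Finset (Fin n)) (k : ℕ) (c : ℝ) (a : Fin n → ℝ) :
    esym s k (fun i => c * a i) = c ^ k * esym s k a := by
  rw [esym, esym, mul_sum]
  refine sum_congr rfl fun T hT => ?_
  rw [prod_mul_distrib, prod_const, (mem_powersetCard.mp hT).2]

lemma const (s : Finset (Fin n)) (k : ℕ) (c : ℝ) :
    esym s k (fun _ => c) = s.card.choose k * c ^ k := by
  rw [esym, sum_congr rfl fun T hT => by rw [prod_const, (mem_powersetCard.mp hT).2],
    sum_const, card_powersetCard, nsmul_eq_mul]

lemma pos {s : Finset (Fin n)} {k : ℕ} {a : Fin n → ℝ} (ha : ∀ i ∈ s, 0 < a i)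
    (hk : k ≤ s.card) : 0 < esym s k a :=
  sum_pos (fun _ hT => prod_pos fun i hi => ha i ((mem_powersetCard.mp hT).1 hi))
    (powersetCard_nonempty.2 hk)

lemma insert_succ {m : Fin n} {s : Finset (Fin n)} (hm : m ∉ s) (k : ℕ) (a : Fin n → ℝ) :
    esym (insert m s) (k + 1) a = esym s (k + 1) a + a m * esym s k a := by
  simp only [eq_esymm_map, insert_val_of_notMem hm, Multiset.map_cons, Multiset.esymm,
    Multiset.powersetCard_cons, Multiset.map_add, Multiset.sum_add, Multiset.map_map,
    Function.comp_def, Multiset.prod_cons, Multiset.sum_map_mul_left]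

lemma univ_succ (m : Fin n) (k : ℕ) (a : Fin n → ℝ) :
    esym univ (k + 1) a = esym (univ.erase m) (k + 1) a + a m * esym (univ.erase m) k a := by
  conv_lhs => rw [← insert_erase (mem_univ m)]
  exact insert_succ (notMem_erase m _) k a

lemma univ_succ_mul_add_single (m : Fin n) (k : ℕ) (c e : ℝ) (a : Fin n → ℝ) :
    esym univ (k + 1) (fun i => c * a i + (Pi.single m e : Fin n → ℝ) i)
      = c ^ (k + 1) * esym univ (k + 1) a + e * c ^ k * esym (univ.erase m) k a := by
  have hoff : ∀ i ∈ univ.erase m, c * a i + (Pi.single m e : Fin n → ℝ) i = c * a i :=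
    fun i hi => by rw [Pi.single_eq_of_ne (ne_of_mem_erase hi), add_zero]
  rw [univ_succ m, univ_succ m (a := a), congr _ hoff, congr _ hoff, const_mul, const_mul,
    Pi.single_eq_same]
  ring

lemma eq_of_mul_esym_erase_eq {a : Fin n → ℝ} (ha : ∀ i, 0 < a i) {k : ℕ} (hk : k + 3 ≤ n)
    (h : ∀ i j, a i * esym (univ.erase i) (k + 1) a = a j * esym (univ.erase j) (k + 1) a)
    (i j : Fin n) : a i = a j := by
  rcases eq_or_ne i j with rfl | hij
  · rfl
  set s := (univ.erase i).erase j
  have hsi : univ.erase i = insert j s :=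
    (insert_erase (mem_erase.2 ⟨hij.symm, mem_univ j⟩)).symm
  have hsj : univ.erase j = insert i s := by
    rw [show s = (univ.erase j).erase i from erase_right_comm,
      insert_erase (mem_erase.2 ⟨hij, mem_univ i⟩)]
  have hpos : 0 < esym s (k + 1) a := by
    refine pos (fun i _ => ha i) ?_
    rw [card_erase_of_mem (mem_erase.2 ⟨hij.symm, mem_univ j⟩), card_erase_of_mem (mem_univ i),
      card_univ, Fintype.card_fin]
    omega
  have hij' := h i j
  rw [hsi, hsj, insert_succ (notMem_erase j _), insert_succ (by simp [s, hij])] at hij'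
  have : (a i - a j) * esym s (k + 1) a = 0 := by linear_combination hij'
  simpa [hpos.ne', sub_eq_zero] using this

lemma eq_choose_rpow_of_const_eq_one {c : ℝ} (hc : 0 < c) {k : ℕ} (hk : k ≠ 0)
    (h : esym (univ : Finset (Fin n)) k (fun _ => c) = 1) :
    c = (n.choose k : ℝ) ^ (-(1 : ℝ) / k) := by
  rw [const, card_univ, Fintype.card_fin] at h
  have hck : c ^ k = (n.choose k : ℝ)⁻¹ := eq_inv_of_mul_eq_one_right h
  rw [neg_div, one_div, Real.rpow_neg (Nat.cast_nonneg _), ← Real.inv_rpow (Nat.cast_nonneg _),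
    ← hck, Real.pow_rpow_inv_natCast hc.le hk]

end esym

lemma Matrix.IsHermitian.esym_eigenvalues_of_eq_diagonal {A : Matrix (Fin n) (Fin n) ℝ}
    (hA : A.IsHermitian) {d : Fin n → ℝ} (h : A = diagonal d) (k : ℕ) :
    esym univ k hA.eigenvalues = esym univ k d := by
  subst h
  have hroots := hA.roots_charpoly_eq_eigenvalues
  rw [charpoly_diagonal, Polynomial.roots_prod _ _ (by simp [prod_ne_zero_iff,
    Polynomial.X_sub_C_ne_zero])] at hroots
  simp only [Polynomial.roots_X_sub_C, Multiset.bind_singleton, RCLike.ofReal_real_eq_id,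
    Function.id_comp] at hroots
  rw [esym.eq_esymm_map, esym.eq_esymm_map, hroots]

noncomputable def quadForm (a x : Fin n → ℝ) : ℝ :=
  1 / 2 * ∑ i, a i * x i ^ 2

lemma continuous_quadForm (a : Fin n → ℝ) : Continuous (quadForm a) := by
  unfold quadForm; fun_prop

lemma quadForm_single (a : Fin n → ℝ) (m : Fin n) (t : ℝ) :
    quadForm a (Pi.single m t) = a m * t ^ 2 / 2 := by
  rw [quadForm, sum_eq_single m (fun i _ hi => by simp [hi]) (by simp), Pi.single_eq_same]
  ring

lemma hasFDerivAt_quadForm (a y : Fin n → ℝ) :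
    HasFDerivAt (quadForm a)
      (∑ i, (a i * y i) • (ContinuousLinearMap.proj i : (Fin n → ℝ) →L[ℝ] ℝ)) y := by
  have hterm (i : Fin n) : HasFDerivAt (fun x : Fin n → ℝ => 1 / 2 * (a i * x i ^ 2))
      ((a i * y i) • (ContinuousLinearMap.proj i : (Fin n → ℝ) →L[ℝ] ℝ)) y := by
    refine ((((hasFDerivAt_apply (𝕜 := ℝ) (F' := fun _ : Fin n => ℝ) i y).pow 2).const_mul
      (a i)).const_mul (1 / 2)).congr_fderiv ?_
    ext v
    simp
    ring
  have hsum : quadForm a = fun x => ∑ i, 1 / 2 * (a i * x i ^ 2) := by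
    ext x
    rw [quadForm, mul_sum]
  rw [hsum]
  exact HasFDerivAt.fun_sum fun i _ => hterm i

lemma fderiv_quadForm_apply_single (a y : Fin n → ℝ) (j : Fin n) :
    (∑ i, (a i * y i) • (ContinuousLinearMap.proj i : (Fin n → ℝ) →L[ℝ] ℝ))
      (Pi.single j 1) = a j * y j := by
  simp [Pi.single_apply]

lemma hess_comp_quadForm {a : Fin n → ℝ} {ω : ℝ → ℝ} {U : Set ℝ} (hU : IsOpen U)
    (hω : ContDiffOn ℝ 2 ω U) {x : Fin n → ℝ} (hx : quadForm a x ∈ U) :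
    hess (ω ∘ quadForm a) x = deriv ω (quadForm a x) • diagonal a
      + deriv (deriv ω) (quadForm a x) • vecMulVec (a * x) (a * x) := by
  have hω' (r) (hr : r ∈ U) : HasDerivAt ω (deriv ω r) r :=
    ((hω.contDiffAt (hU.mem_nhds hr)).differentiableAt two_ne_zero).hasDerivAt
  have hω'' (r) (hr : r ∈ U) : HasDerivAt (deriv ω) (deriv (deriv ω) r) r :=
    (((hω.deriv_of_isOpen hU le_rfl).contDiffAt (hU.mem_nhds hr)).differentiableAt
      one_ne_zero).hasDerivAt
  ext i j
  have hpartial : (fun y => fderiv ℝ (ω ∘ quadForm a) y (Pi.single j 1))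
      =ᶠ[nhds x] fun y => deriv ω (quadForm a y) * (a j * y j) := by
    filter_upwards [(hU.preimage (continuous_quadForm a)).mem_nhds hx] with y hy
    rw [((hω' _ hy).comp_hasFDerivAt y (hasFDerivAt_quadForm a y)).fderiv,
      _root_.smul_apply, fderiv_quadForm_apply_single, smul_eq_mul]
  have hsecond : HasFDerivAt (fun y => deriv ω (quadForm a y) * (a j * y j)) _ x :=
    ((hω'' _ hx).comp_hasFDerivAt x (hasFDerivAt_quadForm a x)).fun_mul
      ((hasFDerivAt_apply (𝕜 := ℝ) (F' := fun _ : Fin n => ℝ) j x).const_mul (a j))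
  rw [hess, hpartial.fderiv_eq, hsecond.fderiv]
  simp only [_root_.add_apply, _root_.smul_apply, fderiv_quadForm_apply_single,
    Function.comp_apply, smul_eq_mul, ContinuousLinearMap.proj_apply, Pi.single_apply,
    Matrix.add_apply, Matrix.smul_apply, diagonal_apply, vecMulVec_apply, Pi.mul_apply, eq_comm]
  split_ifs with hij
  · subst hij; ring
  · ring

lemma hess_comp_quadForm_single {a : Fin n → ℝ} {ω : ℝ → ℝ} {U : Set ℝ} (hU : IsOpen U)
    (hω : ContDiffOn ℝ 2 ω U) {m : Fin n} {t : ℝ} (hx : quadForm a (Pi.single m t) ∈ U) :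
    hess (ω ∘ quadForm a) (Pi.single m t) = diagonal fun i =>
      deriv ω (quadForm a (Pi.single m t)) * a i
        + (Pi.single m (deriv (deriv ω) (quadForm a (Pi.single m t)) * (a m * t) ^ 2) :
          Fin n → ℝ) i := by
  rw [hess_comp_quadForm hU hω hx]
  ext i j
  rcases eq_or_ne i j with rfl | hij
  · rcases eq_or_ne i m with rfl | him
    · simp [vecMulVec_apply, sq]
    · simp [vecMulVec_apply, him]
  · rcases eq_or_ne i m with rfl | him
    · simp [vecMulVec_apply, hij, hij.symm]
    · simp [vecMulVec_apply, hij, him]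

lemma esym_eigenvalues_hess_comp_quadForm_single {a : Fin n → ℝ} {ω : ℝ → ℝ} {U : Set ℝ}
    (hU : IsOpen U) (hω : ContDiffOn ℝ 2 ω U) {m : Fin n} {t : ℝ}
    (hx : quadForm a (Pi.single m t) ∈ U) (hH : (hess (ω ∘ quadForm a) (Pi.single m t)).IsHermitian)
    (k : ℕ) :
    esym univ (k + 1) hH.eigenvalues
      = deriv ω (quadForm a (Pi.single m t)) ^ (k + 1) * esym univ (k + 1) a
        + deriv (deriv ω) (quadForm a (Pi.single m t)) * (a m * t) ^ 2
          * deriv ω (quadForm a (Pi.single m t)) ^ k * esym (univ.erase m) k a := by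
  rw [hH.esym_eigenvalues_of_eq_diagonal (hess_comp_quadForm_single hU hω hx),
    esym.univ_succ_mul_add_single]

end

theorem stmt_17_general (n k : ℕ) (hk : 2 ≤ k) (hkn : k ≤ n - 1)
    (a : Fin n → ℝ) (hpos : ∀ i, 0 < a i) (hsk : esym Finset.univ k a = 1)
    (α β : ℝ) (hα : 0 < α)
    (ω : ℝ → ℝ) (hω : ContDiffOn ℝ 2 ω (Set.Ioo α β))
    (hω'' : ∃ s ∈ Set.Ioo α β, deriv (deriv ω) s ≠ 0)
    (u : (Fin n → ℝ) → ℝ)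
    (hu : ∀ x, u x = ω ((1 : ℝ) / 2 * ∑ i, a i * x i ^ 2))
    (heq : ∀ x : Fin n → ℝ,
      (1 : ℝ) / 2 * ∑ i, a i * x i ^ 2 ∈ Set.Ioo α β →
        ∀ hM : (hess u x).IsHermitian, esym Finset.univ k hM.eigenvalues = 1) :
    ∀ i, a i = ((n.choose k : ℝ)) ^ (-(1 : ℝ) / k) := by
  obtain ⟨p, rfl⟩ : ∃ p, k = p + 2 := ⟨k - 2, by omega⟩
  obtain ⟨s, hs, hω''s⟩ := hω''
  have hs0 : 0 < s := hα.trans hs.1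
  obtain rfl : u = ω ∘ quadForm a := funext hu
  have key (m : Fin n) : deriv ω s ^ (p + 2) + deriv (deriv ω) s * (2 * s) * deriv ω s ^ (p + 1)
      * (a m * esym (univ.erase m) (p + 1) a) = 1 := by
    set t := √(2 * s / a m)
    have hat : a m * t ^ 2 = 2 * s := by
      rw [Real.sq_sqrt (div_pos (by positivity) (hpos m)).le]
      field_simp [(hpos m).ne']
    have hq : quadForm a (Pi.single m t) = s := by rw [quadForm_single, hat]; ring
    have hx : quadForm a (Pi.single m t) ∈ Set.Ioo α β := hq ▸ hs
    have hH := hess_comp_quadForm_single isOpen_Ioo hω hx ▸ isHermitian_diagonal _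
    have h := heq _ hx hH
    rw [esym_eigenvalues_hess_comp_quadForm_single isOpen_Ioo hω hx, hq, hsk] at h
    linear_combination h - deriv (deriv ω) s * deriv ω s ^ (p + 1) * a m
      * esym (univ.erase m) (p + 1) a * hat
  have hω's : deriv ω s ≠ 0 := fun h => by simpa [h] using key ⟨0, by omega⟩
  have hprod (i j : Fin n) :
      a i * esym (univ.erase i) (p + 1) a = a j * esym (univ.erase j) (p + 1) a :=
    mul_left_cancel₀ (a := deriv (deriv ω) s * (2 * s) * deriv ω s ^ (p + 1)) (by positivity)
      (by linear_combination key i - key j)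
  intro i
  have hconst : a = fun _ => a i :=
    funext fun j => esym.eq_of_mul_esym_erase_eq hpos (by omega) hprod j i
  rw [hconst] at hsk
  exact esym.eq_choose_rpow_of_const_eq_one (hpos i) (by omega) hsk

/-- If a generalized symmetric function `u(x) = ω(½∑aᵢxᵢ²)` with `ω''` not identically zero
solves `σ_k(λ(D²u)) = 1` on `{α < ½∑aᵢxᵢ² < β}` with `σ_k(a) = 1`, `2 ≤ k ≤ n-1`, then
`a₁ = ⋯ = aₙ = (n choose k)^{-1/k}`. -/
theorem stmt_17 (n k : ℕ) (hn : 3 ≤ n) (hk : 2 ≤ k) (hkn : k ≤ n - 1)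
    (a : Fin n → ℝ) (hpos : ∀ i, 0 < a i) (hsk : esym Finset.univ k a = 1)
    (α β : ℝ) (hα : 0 < α) (hβ : α < β)
    (ω : ℝ → ℝ) (hω : ContDiffOn ℝ 2 ω (Set.Ioo α β))
    (hω'' : ∃ s ∈ Set.Ioo α β, deriv (deriv ω) s ≠ 0)
    (u : (Fin n → ℝ) → ℝ)
    (hu : ∀ x, u x = ω ((1 : ℝ) / 2 * ∑ i, a i * x i ^ 2))
    (heq : ∀ x : Fin n → ℝ,
      (1 : ℝ) / 2 * ∑ i, a i * x i ^ 2 ∈ Set.Ioo α β →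
        ∀ hM : (hess u x).IsHermitian, esym Finset.univ k hM.eigenvalues = 1) :
    ∀ i, a i = ((n.choose k : ℝ)) ^ (-(1 : ℝ) / k) :=
  stmt_17_general n k hk hkn a hpos hsk α β hα ω hω hω'' u hu heq
end
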